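/- The optimal spoofing objective f(v) = (ρa)²/(2a) + Q v²/(2a) + (Qρ+ν)v + ρaμ⁺(2ι(v)−1), with ι(v) = b/(a+b+wv), has first-order condition at an interior optimum v > 0 given by Q v/a + (Qρ+ν) = 2ρwμ⁺((1−ī)/ī)·ι(v)², so the optimal volume expressed in terms of the optimal imbalance ι is v(ι) = (a/Q)·[2ρwμ⁺((1−ī)/ī)ι² − (Qρ+ν)]⁺. -/

import Mathlib

/-!
An interior minimiser of `f` on `[0, ∞)` is a local minimum, so `f'(v) = 0`. The imbalance
`ι(v) = b / (a + b + w v)` satisfies `ι' = -(w / b) ι²`, and `a / b = (1 - ī) / ī`, which turns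
`f'(v) = 0` into the first-order condition. Its right side minus `Qρ + ν` is `Q v / a ≥ 0`, so
the positive part is inactive and the formula for `v(ι)` is the condition solved for `v`.
-/

noncomputable def spoofObjective (a Q w μp ρ ν b v : ℝ) : ℝ :=
  (ρ * a) ^ 2 / (2 * a) + Q * v ^ 2 / (2 * a) + (Q * ρ + ν) * v
    + ρ * a * μp * (2 * (b / (a + b + w * v)) - 1)

lemma hasDerivAt_div_affine {b c w v : ℝ} (hD : c + w * v ≠ 0) :
    HasDerivAt (fun x : ℝ => b / (c + w * x)) (-(w / b) * (b / (c + w * v)) ^ 2) v := by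
  have hlin : HasDerivAt (fun x : ℝ => c + w * x) w v := by
    simpa using ((hasDerivAt_id v).const_mul w).const_add c
  refine ((hasDerivAt_const v b).div hlin hD).congr_deriv ?_
  field_simp
  ring

lemma hasDerivAt_spoofObjective {a Q w μp ρ ν b v : ℝ} (ha : a ≠ 0)
    (hD : a + b + w * v ≠ 0) :
    HasDerivAt (spoofObjective a Q w μp ρ ν b)
      (Q * v / a + (Q * ρ + ν) - 2 * ρ * w * μp * (a / b) * (b / (a + b + w * v)) ^ 2) v := by
  have hquad : HasDerivAt (fun x : ℝ => Q * x ^ 2 / (2 * a)) (Q * v / a) v := by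
    refine (((hasDerivAt_pow 2 v).const_mul Q).div_const (2 * a)).congr_deriv ?_
    push_cast
    field_simp
  have hlin : HasDerivAt (fun x : ℝ => (Q * ρ + ν) * x) (Q * ρ + ν) v := by
    simpa using (hasDerivAt_id v).const_mul (Q * ρ + ν)
  have himb :=
    (((hasDerivAt_div_affine (b := b) hD).const_mul 2).sub_const 1).const_mul (ρ * a * μp)
  have hsum := (((hasDerivAt_const v ((ρ * a) ^ 2 / (2 * a))).add hquad).add hlin).add himb
  refine hsum.congr_deriv ?_
  field_simp
  ring

lemma div_eq_one_sub_div_of_eq_mul_div_one_sub {a b ibar : ℝ} (ha : a ≠ 0) (hibar0 : ibar ≠ 0)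
    (hibar1 : ibar ≠ 1) (hb : b = a * ibar / (1 - ibar)) : a / b = (1 - ibar) / ibar := by
  have : 1 - ibar ≠ 0 := sub_ne_zero.mpr hibar1.symm
  rw [hb]
  field_simp

lemma eq_div_mul_max_of_mul_div_add_eq {a Q c y v : ℝ} (ha : 0 < a) (hQ : 0 < Q) (hv : 0 ≤ v)
    (h : Q * v / a + c = y) : v = (a / Q) * max (y - c) 0 := by
  rw [← h, add_sub_cancel_right, max_eq_left (by positivity)]
  field_simp

theorem stmt_9_general (a Q w μp ρ ν ibar b : ℝ)
    (ha : 0 < a) (hQ : 0 < Q) (hw : 0 < w)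
    (hibar0 : 0 < ibar) (hibar1 : ibar < 1) (hb : b = a * ibar / (1 - ibar))
    (f : ℝ → ℝ)
    (hf : f = fun v => (ρ * a) ^ 2 / (2 * a) + Q * v ^ 2 / (2 * a) + (Q * ρ + ν) * v
      + ρ * a * μp * (2 * (b / (a + b + w * v)) - 1))
    (v : ℝ) (hv : 0 < v) (hmin : IsMinOn f (Set.Ici 0) v) :
    Q * v / a + (Q * ρ + ν)
      = 2 * ρ * w * μp * ((1 - ibar) / ibar) * (b / (a + b + w * v)) ^ 2 ∧
    v = (a / Q)
      * max (2 * ρ * w * μp * ((1 - ibar) / ibar) * (b / (a + b + w * v)) ^ 2 - (Q * ρ + ν)) 0 := by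
  have hbpos : 0 < b := by
    rw [hb]
    exact div_pos (mul_pos ha hibar0) (sub_pos.mpr hibar1)
  have hobj : f = spoofObjective a Q w μp ρ ν b := hf
  have hlocal : IsLocalMin f v := hmin.isLocalMin (Ici_mem_nhds hv)
  rw [hobj] at hlocal
  have hfoc := hlocal.hasDerivAt_eq_zero
    (hasDerivAt_spoofObjective ha.ne' (by positivity : a + b + w * v ≠ 0))
  rw [div_eq_one_sub_div_of_eq_mul_div_one_sub ha.ne' hibar0.ne' hibar1.ne hb] at hfoc
  have hcond : Q * v / a + (Q * ρ + ν)
      = 2 * ρ * w * μp * ((1 - ibar) / ibar) * (b / (a + b + w * v)) ^ 2 := by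
    linarith
  exact ⟨hcond, eq_div_mul_max_of_mul_div_add_eq ha hQ hv.le hcond⟩

/-- First-order condition for the optimal spoofing volume: if `v > 0` minimizes the spoofing
objective `f` over `[0,∞)`, then `Qv/a + (Qρ+ν) = 2ρwμ⁺((1−ibar)/ibar)ι(v)²`, and hence
`v = (a/Q)[2ρwμ⁺((1−ibar)/ibar)ι(v)² − (Qρ+ν)]⁺`. -/
theorem stmt_9 (a Q w μp ρ ν ibar b : ℝ)
    (ha : 0 < a) (hQ : 0 < Q) (hw : 0 < w) (hμ : 0 < μp) (hρ : 0 < ρ) (hν : 0 ≤ ν)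
    (hibar0 : 0 < ibar) (hibar1 : ibar < 1) (hb : b = a * ibar / (1 - ibar))
    (f : ℝ → ℝ)
    (hf : f = fun v => (ρ * a) ^ 2 / (2 * a) + Q * v ^ 2 / (2 * a) + (Q * ρ + ν) * v
      + ρ * a * μp * (2 * (b / (a + b + w * v)) - 1))
    (v : ℝ) (hv : 0 < v) (hmin : IsMinOn f (Set.Ici 0) v) :
    Q * v / a + (Q * ρ + ν)
      = 2 * ρ * w * μp * ((1 - ibar) / ibar) * (b / (a + b + w * v)) ^ 2 ∧
    v = (a / Q)
      * max (2 * ρ * w * μp * ((1 - ibar) / ibar) * (b / (a + b + w * v)) ^ 2 - (Q * ρ + ν)) 0 :=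
  stmt_9_general a Q w μp ρ ν ibar b ha hQ hw hibar0 hibar1 hb f hf v hv hmin
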